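/- arXiv:2501.00653 — 2 statements merged into one kernel-verified Lean document; each statement's English description precedes it below -/
import Mathlib

section
/- Let n ≥ 2 and 1 ≤ k ≤ n−1, let u¹,…,uᵐ ∈ ℝⁿ (unit vectors) with weights λ₁,…,λₘ > 0 form a John decomposition, and let s > 0. Let E be the k-ellipsoid with orthonormal axis directions v¹,…,vᵏ, center c and semi-axes α₁,…,α_k > 0, and suppose −s ≤ ⟨x,uᵢ⟩ ≤ 1 for every x ∈ E and every i (i.e., E is contained in the polyhedron P = ⋂ᵢ{x : ⟨x,uᵢ⟩ ≤ 1} and in −s·P). Then ∏ⱼ αⱼ ≤ (n(s+1)/(2k))^{k/2}. Moreover, if equality holds, then: (i) αⱼ = √(n(s+1)/(2k)) for every j; (ii) ‖c‖² = n(s−1)/2, ⟨c,vⱼ⟩ = 0 for every j ∈ {1,…,k}, and for every i either ⟨c,uᵢ⟩ = 1 or ⟨c,uᵢ⟩ = (1−s)/2; and (iii) s ≤ 1 or s ≥ 1 + 2/n. -/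
/-!
In a direction `y` the ellipsoid reaches exactly `⟪c, y⟫ ± h(y)` with
`h(y)² = ∑ⱼ αⱼ² ⟪y, vⱼ⟫²`, so lying between `-s` and `1` along `uᵢ` gives
`h(uᵢ)² ≤ (s + 1)(1 - ⟪c, uᵢ⟫) / 2`. Weighting by the John weights, `∑ λᵢ h(uᵢ)² = ∑ αⱼ²` and
`∑ λᵢ (1 - ⟪c, uᵢ⟫) = n`, hence `∑ αⱼ² ≤ n(s + 1)/2`, and AM–GM bounds `∏ αⱼ`. At equality every
step is tight: the `αⱼ` are equal, each `⟪c, uᵢ⟫` is a root of `(1 - a)(1 - s - 2a) = 0`, and the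
identities `∑ λᵢ (1 - ⟪c, uᵢ⟫)² = n + ‖c‖²` and `∑ λᵢ ⟪uᵢ, vⱼ⟫ ⟪uᵢ, c⟫ = ⟪vⱼ, c⟫` locate `c`.
-/

open scoped InnerProductSpace BigOperators

open Finset Module Real

section AMGM

variable {ι : Type*} [Fintype ι] {x : ι → ℝ} {T : ℝ}

theorem le_mul_exp_div_sub_one (hT : 0 < T) (y : ℝ) : y ≤ T * exp (y / T - 1) := by
  have := add_one_le_exp (y / T - 1)
  calc y = T * (y / T - 1 + 1) := by field_simp; ring
    _ ≤ T * exp (y / T - 1) := by gcongr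

theorem lt_mul_exp_div_sub_one (hT : 0 < T) {y : ℝ} (hy : y ≠ T) : y < T * exp (y / T - 1) := by
  have : y / T - 1 ≠ 0 := by
    rwa [sub_ne_zero, ne_eq, div_eq_one_iff_eq hT.ne']
  calc y = T * (y / T - 1 + 1) := by field_simp; ring
    _ < T * exp (y / T - 1) := by gcongr; exact add_one_lt_exp this

theorem prod_mul_exp_div_sub_one_le (hT : 0 < T) (h : ∑ i, x i ≤ Fintype.card ι * T) :
    ∏ i, T * exp (x i / T - 1) ≤ T ^ Fintype.card ι := by
  rw [prod_mul_distrib, prod_const, ← exp_sum, sum_sub_distrib, ← sum_div, card_univ]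
  refine mul_le_of_le_one_right (by positivity) (exp_le_one_iff.mpr ?_)
  rw [sub_nonpos, sum_const, card_univ, nsmul_one, div_le_iff₀ hT]
  exact h

/-- AM–GM, by multiplying the bounds `x i ≤ T * exp (x i / T - 1)`. -/
theorem prod_le_pow_card_of_sum_le (hT : 0 < T) (hx : ∀ i, 0 ≤ x i)
    (h : ∑ i, x i ≤ Fintype.card ι * T) : ∏ i, x i ≤ T ^ Fintype.card ι :=
  (prod_le_prod (fun i _ => hx i) fun i _ => le_mul_exp_div_sub_one hT (x i)).trans
    (prod_mul_exp_div_sub_one_le hT h)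

theorem eq_of_prod_eq_pow_card_of_sum_le (hT : 0 < T) (hx : ∀ i, 0 < x i)
    (h : ∑ i, x i ≤ Fintype.card ι * T) (heq : ∏ i, x i = T ^ Fintype.card ι) (i : ι) :
    x i = T := by
  by_contra hi
  have := prod_lt_prod (fun i _ => hx i) (fun i _ => le_mul_exp_div_sub_one hT (x i))
    ⟨i, mem_univ i, lt_mul_exp_div_sub_one hT hi⟩
  exact (heq ▸ this).not_ge (prod_mul_exp_div_sub_one_le hT h)

theorem prod_le_sqrt_pow_card_of_sum_sq_le {a : ι → ℝ} (hT : 0 < T) (ha : ∀ i, 0 ≤ a i)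
    (h : ∑ i, a i ^ 2 ≤ Fintype.card ι * T) : ∏ i, a i ≤ √T ^ Fintype.card ι := by
  rw [← pow_le_pow_iff_left₀ (prod_nonneg fun i _ => ha i) (by positivity) two_ne_zero, ← prod_pow,
    ← pow_mul, mul_comm, pow_mul, sq_sqrt hT.le]
  exact prod_le_pow_card_of_sum_le hT (fun i => sq_nonneg (a i)) h

theorem eq_sqrt_of_prod_eq_sqrt_pow_card {a : ι → ℝ} (hT : 0 < T) (ha : ∀ i, 0 < a i)
    (h : ∑ i, a i ^ 2 ≤ Fintype.card ι * T) (heq : ∏ i, a i = √T ^ Fintype.card ι) (i : ι) :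
    a i = √T := by
  have := eq_of_prod_eq_pow_card_of_sum_le hT (fun i => pow_pos (ha i) 2) h
    (by rw [prod_pow, heq, ← pow_mul, mul_comm, pow_mul, sq_sqrt hT.le]) i
  rw [← this, sqrt_sq (ha i).le]

end AMGM

section JohnDecomposition

variable {ι E : Type*} [Fintype ι] [NormedAddCommGroup E] [InnerProductSpace ℝ E]
  {u : ι → E} {lam : ι → ℝ}

theorem sum_mul_inner_mul_inner_eq_inner
    (hdecomp : ∀ x : E, ∑ i, (lam i * ⟪u i, x⟫_ℝ) • u i = x) (x y : E) :
    ∑ i, lam i * ⟪u i, x⟫_ℝ * ⟪u i, y⟫_ℝ = ⟪x, y⟫_ℝ := by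
  conv_rhs => rw [← hdecomp x]
  simp only [sum_inner, real_inner_smul_left]

theorem sum_mul_inner_sq_eq_norm_sq
    (hdecomp : ∀ x : E, ∑ i, (lam i * ⟪u i, x⟫_ℝ) • u i = x) (x : E) :
    ∑ i, lam i * ⟪u i, x⟫_ℝ ^ 2 = ‖x‖ ^ 2 := by
  simp only [sq, ← mul_assoc, sum_mul_inner_mul_inner_eq_inner hdecomp,
    real_inner_self_eq_norm_mul_norm]

theorem sum_mul_inner_eq_zero (hsum : ∑ i, lam i • u i = 0) (x : E) :
    ∑ i, lam i * ⟪x, u i⟫_ℝ = 0 := by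
  simpa only [inner_sum, real_inner_smul_right, inner_zero_right] using congrArg (⟪x, ·⟫_ℝ) hsum

theorem sum_eq_finrank_of_decomp [FiniteDimensional ℝ E] (hu : ∀ i, ‖u i‖ = 1)
    (hdecomp : ∀ x : E, ∑ i, (lam i * ⟪u i, x⟫_ℝ) • u i = x) :
    ∑ i, lam i = finrank ℝ E := by
  let b := stdOrthonormalBasis ℝ E
  calc ∑ i, lam i = ∑ i, lam i * ∑ a, ⟪u i, b a⟫_ℝ ^ 2 := by
        simp only [b.sum_sq_inner_left, hu, one_pow, mul_one]
    _ = ∑ a, ‖b a‖ ^ 2 := by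
        simp only [mul_sum, ← sum_mul_inner_sq_eq_norm_sq hdecomp]
        exact sum_comm
    _ = finrank ℝ E := by simp [b.orthonormal.1]

theorem sum_mul_one_sub_inner_sq_eq [FiniteDimensional ℝ E] (hu : ∀ i, ‖u i‖ = 1)
    (hsum : ∑ i, lam i • u i = 0)
    (hdecomp : ∀ x : E, ∑ i, (lam i * ⟪u i, x⟫_ℝ) • u i = x) (x : E) :
    ∑ i, lam i * (1 - ⟪x, u i⟫_ℝ) ^ 2 = finrank ℝ E + ‖x‖ ^ 2 := by
  have expand : ∀ i, lam i * (1 - ⟪x, u i⟫_ℝ) ^ 2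
      = lam i - 2 * (lam i * ⟪x, u i⟫_ℝ) + lam i * ⟪u i, x⟫_ℝ ^ 2 := fun i => by
    rw [real_inner_comm]; ring
  simp only [expand, sum_add_distrib, sum_sub_distrib, ← mul_sum,
    sum_eq_finrank_of_decomp hu hdecomp, sum_mul_inner_eq_zero hsum,
    sum_mul_inner_sq_eq_norm_sq hdecomp]
  ring

end JohnDecomposition

section Ellipsoid

variable {κ E : Type*} [Fintype κ] [NormedAddCommGroup E] [InnerProductSpace ℝ E]

/-- For orthonormal `v`, the support function of `{∑ j, t j • v j | ∑ j, t j ^ 2 / α j ^ 2 ≤ 1}`. -/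
noncomputable def ellipsoidSupport (α : κ → ℝ) (v : κ → E) (y : E) : ℝ :=
  √(∑ j, α j ^ 2 * ⟪y, v j⟫_ℝ ^ 2)

theorem ellipsoidSupport_neg (α : κ → ℝ) (v : κ → E) (y : E) :
    ellipsoidSupport α v (-y) = ellipsoidSupport α v y := by
  simp [ellipsoidSupport]

theorem ellipsoidSupport_sq (α : κ → ℝ) (v : κ → E) (y : E) :
    ellipsoidSupport α v y ^ 2 = ∑ j, α j ^ 2 * ⟪y, v j⟫_ℝ ^ 2 :=
  sq_sqrt (by positivity)

theorem inner_eq_zero_of_ellipsoidSupport_eq_zero {α : κ → ℝ} {v : κ → E} {y : E}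
    (h : ellipsoidSupport α v y = 0) {j : κ} (hα : α j ≠ 0) : ⟪y, v j⟫_ℝ = 0 := by
  rw [ellipsoidSupport, sqrt_eq_zero (by positivity),
    sum_eq_zero_iff_of_nonneg fun _ _ => by positivity] at h
  simpa [hα] using h j (mem_univ j)

/-- Cauchy–Schwarz is attained at `t j = α j ^ 2 * a j / R`; when `R = 0` this is `t = 0`. -/
theorem exists_sum_sq_div_le_one_sum_mul_eq_sqrt (α a : κ → ℝ) (hα : ∀ j, α j ≠ 0) :
    ∃ t : κ → ℝ, ∑ j, t j ^ 2 / α j ^ 2 ≤ 1 ∧ ∑ j, t j * a j = √(∑ j, α j ^ 2 * a j ^ 2) := by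
  set Q := ∑ j, α j ^ 2 * a j ^ 2
  have hQ : 0 ≤ Q := by positivity
  refine ⟨fun j => α j ^ 2 * a j / √Q, ?_, ?_⟩
  · calc ∑ j, (α j ^ 2 * a j / √Q) ^ 2 / α j ^ 2 = Q / √Q ^ 2 := by
          rw [sum_div]; refine sum_congr rfl fun j _ => ?_; field_simp [hα j]
      _ ≤ 1 := by rw [sq_sqrt hQ]; exact div_self_le_one Q
  · calc ∑ j, α j ^ 2 * a j / √Q * a j = √Q ^ 2 / √Q := by
          rw [sq_sqrt hQ, sum_div]; exact sum_congr rfl fun j _ => by ring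
      _ = √Q := by rw [sq, mul_self_div_self]

theorem inner_add_ellipsoidSupport_le {α : κ → ℝ} (hα : ∀ j, α j ≠ 0) {v : κ → E} {c y : E}
    {b : ℝ} (h : ∀ t : κ → ℝ, ∑ j, t j ^ 2 / α j ^ 2 ≤ 1 → ⟪c + ∑ j, t j • v j, y⟫_ℝ ≤ b) :
    ⟪c, y⟫_ℝ + ellipsoidSupport α v y ≤ b := by
  obtain ⟨t, ht, hty⟩ := exists_sum_sq_div_le_one_sum_mul_eq_sqrt α (fun j => ⟪y, v j⟫_ℝ) hα
  calc ⟪c, y⟫_ℝ + ellipsoidSupport α v y = ⟪c + ∑ j, t j • v j, y⟫_ℝ := by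
        simp only [ellipsoidSupport, ← hty, real_inner_comm y, inner_add_right, inner_sum,
          real_inner_smul_right]
    _ ≤ b := h t ht

theorem inner_add_ellipsoidSupport_le_and_sub_le {α : κ → ℝ} (hα : ∀ j, α j ≠ 0) {v : κ → E}
    {c y : E} {a b : ℝ} (h : ∀ t : κ → ℝ, ∑ j, t j ^ 2 / α j ^ 2 ≤ 1 →
      a ≤ ⟪c + ∑ j, t j • v j, y⟫_ℝ ∧ ⟪c + ∑ j, t j • v j, y⟫_ℝ ≤ b) :
    ⟪c, y⟫_ℝ + ellipsoidSupport α v y ≤ b ∧ ellipsoidSupport α v y - ⟪c, y⟫_ℝ ≤ -a := by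
  have hneg := inner_add_ellipsoidSupport_le (y := -y) (b := -a) hα fun t ht => by
    rw [inner_neg_right]; linarith [(h t ht).1]
  rw [inner_neg_right, ellipsoidSupport_neg] at hneg
  exact ⟨inner_add_ellipsoidSupport_le hα fun t ht => (h t ht).2, by linarith⟩

end Ellipsoid

theorem sq_le_of_add_le_of_sub_le {a r s : ℝ} (hr : 0 ≤ r) (h₁ : a + r ≤ 1) (h₂ : r - a ≤ s) :
    r ^ 2 ≤ (s + 1) / 2 * (1 - a) := by
  nlinarith

/-- `r ^ 2` is at most both `(1 - a) ^ 2` and `(1 - a) * (s + a)`, whose average is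
`(s + 1) / 2 * (1 - a)`. -/
theorem sq_eq_and_eq_of_sq_eq {a r s : ℝ} (hr : 0 ≤ r) (h₁ : a + r ≤ 1) (h₂ : r - a ≤ s)
    (heq : r ^ 2 = (s + 1) / 2 * (1 - a)) : r ^ 2 = (1 - a) ^ 2 ∧ (a = 1 ∨ a = (1 - s) / 2) := by
  have hle₁ : r ^ 2 ≤ (1 - a) ^ 2 := by nlinarith
  have hle₂ : r ^ 2 ≤ (1 - a) * (s + a) := by nlinarith
  have hsq : r ^ 2 = (1 - a) ^ 2 := by nlinarith
  refine ⟨hsq, ?_⟩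
  have : (1 - a) * ((1 - a) - (s + a)) = 0 := by nlinarith
  rcases mul_eq_zero.mp this with h | h
  · exact Or.inl (by linarith)
  · exact Or.inr (by linarith)

section EllipsoidInPolytope

variable {ι κ E : Type*} [Fintype ι] [Fintype κ] [NormedAddCommGroup E] [InnerProductSpace ℝ E]
  {u : ι → E} {lam : ι → ℝ} {v : κ → E} {α : κ → ℝ} {c : E} {s : ℝ}

theorem sum_mul_ellipsoidSupport_sq (hdecomp : ∀ x : E, ∑ i, (lam i * ⟪u i, x⟫_ℝ) • u i = x)
    (hv : ∀ j, ‖v j‖ = 1) : ∑ i, lam i * ellipsoidSupport α v (u i) ^ 2 = ∑ j, α j ^ 2 := by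
  simp only [ellipsoidSupport_sq, mul_sum]
  rw [sum_comm]
  refine sum_congr rfl fun j _ => ?_
  simp only [mul_left_comm (lam _), ← mul_sum, sum_mul_inner_sq_eq_norm_sq hdecomp, hv, one_pow,
    mul_one]

theorem inner_center_axis_eq_zero (hsum : ∑ i, lam i • u i = 0)
    (hdecomp : ∀ x : E, ∑ i, (lam i * ⟪u i, x⟫_ℝ) • u i = x) (hα : ∀ j, α j ≠ 0)
    (hsq : ∀ i, ellipsoidSupport α v (u i) ^ 2 = (1 - ⟪c, u i⟫_ℝ) ^ 2)
    (hc : ∀ i, ⟪c, u i⟫_ℝ = 1 ∨ ⟪c, u i⟫_ℝ = (1 - s) / 2) (j : κ) : ⟪c, v j⟫_ℝ = 0 := by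
  have hterm : ∀ i, lam i * ⟪u i, v j⟫_ℝ * ⟪u i, c⟫_ℝ = (1 - s) / 2 * (lam i * ⟪v j, u i⟫_ℝ) := by
    intro i
    rw [real_inner_comm c, real_inner_comm (u i) (v j)]
    rcases hc i with h | h
    · have hzero : ellipsoidSupport α v (u i) = 0 := by
        simpa [h] using hsq i
      rw [inner_eq_zero_of_ellipsoidSupport_eq_zero hzero (hα j)]
      ring
    · rw [h]; ring
  rw [real_inner_comm, ← sum_mul_inner_mul_inner_eq_inner hdecomp, sum_congr rfl fun i _ => hterm i,
    ← mul_sum, sum_mul_inner_eq_zero hsum, mul_zero]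

variable [FiniteDimensional ℝ E]

theorem sum_mul_half_mul_one_sub_inner (hu : ∀ i, ‖u i‖ = 1) (hsum : ∑ i, lam i • u i = 0)
    (hdecomp : ∀ x : E, ∑ i, (lam i * ⟪u i, x⟫_ℝ) • u i = x) :
    ∑ i, lam i * ((s + 1) / 2 * (1 - ⟪c, u i⟫_ℝ)) = finrank ℝ E * (s + 1) / 2 := by
  have expand : ∀ i, lam i * ((s + 1) / 2 * (1 - ⟪c, u i⟫_ℝ))
      = (s + 1) / 2 * (lam i - lam i * ⟪c, u i⟫_ℝ) := fun i => by ring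
  simp only [expand, ← mul_sum, sum_sub_distrib, sum_eq_finrank_of_decomp hu hdecomp,
    sum_mul_inner_eq_zero hsum]
  ring

theorem sum_sq_le_of_forall_ellipsoidSupport_le (hu : ∀ i, ‖u i‖ = 1) (hlam : ∀ i, 0 ≤ lam i)
    (hsum : ∑ i, lam i • u i = 0) (hdecomp : ∀ x : E, ∑ i, (lam i * ⟪u i, x⟫_ℝ) • u i = x)
    (hv : ∀ j, ‖v j‖ = 1)
    (hwidth : ∀ i, ⟪c, u i⟫_ℝ + ellipsoidSupport α v (u i) ≤ 1 ∧
      ellipsoidSupport α v (u i) - ⟪c, u i⟫_ℝ ≤ s) :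
    ∑ j, α j ^ 2 ≤ finrank ℝ E * (s + 1) / 2 := by
  rw [← sum_mul_ellipsoidSupport_sq hdecomp hv, ← sum_mul_half_mul_one_sub_inner hu hsum hdecomp]
  exact sum_le_sum fun i _ => mul_le_mul_of_nonneg_left
    (sq_le_of_add_le_of_sub_le (sqrt_nonneg _) (hwidth i).1 (hwidth i).2) (hlam i)

theorem ellipsoidSupport_sq_eq_of_sum_sq_eq (hu : ∀ i, ‖u i‖ = 1) (hlam : ∀ i, 0 < lam i)
    (hsum : ∑ i, lam i • u i = 0) (hdecomp : ∀ x : E, ∑ i, (lam i * ⟪u i, x⟫_ℝ) • u i = x)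
    (hv : ∀ j, ‖v j‖ = 1)
    (hwidth : ∀ i, ⟪c, u i⟫_ℝ + ellipsoidSupport α v (u i) ≤ 1 ∧
      ellipsoidSupport α v (u i) - ⟪c, u i⟫_ℝ ≤ s)
    (heq : ∑ j, α j ^ 2 = finrank ℝ E * (s + 1) / 2) (i : ι) :
    ellipsoidSupport α v (u i) ^ 2 = (s + 1) / 2 * (1 - ⟪c, u i⟫_ℝ) := by
  have hle : ∀ i ∈ univ, lam i * ellipsoidSupport α v (u i) ^ 2
      ≤ lam i * ((s + 1) / 2 * (1 - ⟪c, u i⟫_ℝ)) := fun i _ => mul_le_mul_of_nonneg_left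
    (sq_le_of_add_le_of_sub_le (sqrt_nonneg _) (hwidth i).1 (hwidth i).2) (hlam i).le
  rw [← sum_mul_ellipsoidSupport_sq hdecomp hv, ← sum_mul_half_mul_one_sub_inner hu hsum hdecomp,
    sum_eq_sum_iff_of_le hle] at heq
  exact mul_left_cancel₀ (hlam i).ne' (heq i (mem_univ i))

theorem norm_sq_eq_of_sum_sq_eq (hu : ∀ i, ‖u i‖ = 1) (hsum : ∑ i, lam i • u i = 0)
    (hdecomp : ∀ x : E, ∑ i, (lam i * ⟪u i, x⟫_ℝ) • u i = x) (hv : ∀ j, ‖v j‖ = 1)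
    (heq : ∑ j, α j ^ 2 = finrank ℝ E * (s + 1) / 2)
    (hsq : ∀ i, ellipsoidSupport α v (u i) ^ 2 = (1 - ⟪c, u i⟫_ℝ) ^ 2) :
    ‖c‖ ^ 2 = finrank ℝ E * (s - 1) / 2 := by
  have := sum_mul_one_sub_inner_sq_eq hu hsum hdecomp c
  simp only [← hsq, sum_mul_ellipsoidSupport_sq hdecomp hv, heq] at this
  linarith

/-- If `1 < s < 1 + 2 / n` then `‖c‖ < 1`, so no `⟪c, u i⟫` equals `1`; but the values `(1 - s) / 2`
alone cannot average to `0`. -/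
theorem le_one_or_one_add_two_div_le (hu : ∀ i, ‖u i‖ = 1) (hsum : ∑ i, lam i • u i = 0)
    (hdecomp : ∀ x : E, ∑ i, (lam i * ⟪u i, x⟫_ℝ) • u i = x) (hE : 0 < finrank ℝ E)
    (hnorm : ‖c‖ ^ 2 = finrank ℝ E * (s - 1) / 2)
    (hc : ∀ i, ⟪c, u i⟫_ℝ = 1 ∨ ⟪c, u i⟫_ℝ = (1 - s) / 2) :
    s ≤ 1 ∨ 1 + 2 / (finrank ℝ E : ℝ) ≤ s := by
  by_contra! hs
  have hE' : (0 : ℝ) < finrank ℝ E := by exact_mod_cast hE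
  have hc1 : ‖c‖ < 1 := by
    rw [← sq_lt_one_iff₀ (norm_nonneg c), hnorm]
    have := hs.2
    rw [← sub_lt_iff_lt_add', lt_div_iff₀ hE'] at this
    linarith
  have hall : ∀ i, ⟪c, u i⟫_ℝ = (1 - s) / 2 := fun i => (hc i).resolve_left fun h =>
    (real_inner_le_norm c (u i)).not_gt (by rw [h, hu, mul_one]; exact hc1)
  have := sum_mul_inner_eq_zero hsum c
  simp only [hall, ← sum_mul, sum_eq_finrank_of_decomp hu hdecomp] at this
  nlinarith

end EllipsoidInPolytope

theorem stmt5_general (n k : ℕ) (hn : 2 ≤ n) (hk : 1 ≤ k)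
    (m : ℕ) (u : Fin m → EuclideanSpace ℝ (Fin n)) (lam : Fin m → ℝ)
    (hu : ∀ i, ‖u i‖ = 1) (hlam : ∀ i, 0 < lam i)
    (hsum : ∑ i, lam i • u i = 0)
    (hdecomp : ∀ x : EuclideanSpace ℝ (Fin n), ∑ i, (lam i * ⟪u i, x⟫_ℝ) • u i = x)
    (s : ℝ) (hs : 0 < s)
    (v : Fin k → EuclideanSpace ℝ (Fin n)) (hv : Orthonormal ℝ v)
    (c : EuclideanSpace ℝ (Fin n))
    (α : Fin k → ℝ) (hα : ∀ j, 0 < α j)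
    (Eell : Set (EuclideanSpace ℝ (Fin n)))
    (hEell : Eell = {x | ∃ t : Fin k → ℝ,
      ∑ j, (t j) ^ 2 / (α j) ^ 2 ≤ 1 ∧ x = c + ∑ j, t j • v j})
    (hEP : ∀ x ∈ Eell, ∀ i, -s ≤ ⟪x, u i⟫_ℝ ∧ ⟪x, u i⟫_ℝ ≤ 1) :
    ∏ j, α j ≤ Real.sqrt ((n : ℝ) * (s + 1) / (2 * k)) ^ k ∧
    (∏ j, α j = Real.sqrt ((n : ℝ) * (s + 1) / (2 * k)) ^ k →
      (∀ j, α j = Real.sqrt ((n : ℝ) * (s + 1) / (2 * k))) ∧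
      ‖c‖ ^ 2 = (n : ℝ) * (s - 1) / 2 ∧
      (∀ j, ⟪c, v j⟫_ℝ = 0) ∧
      (∀ i, ⟪c, u i⟫_ℝ = 1 ∨ ⟪c, u i⟫_ℝ = (1 - s) / 2) ∧
      (s ≤ 1 ∨ 1 + 2 / (n : ℝ) ≤ s)) := by
  have hα₀ : ∀ j, α j ≠ 0 := fun j => (hα j).ne'
  have hwidth : ∀ i, ⟪c, u i⟫_ℝ + ellipsoidSupport α v (u i) ≤ 1 ∧
      ellipsoidSupport α v (u i) - ⟪c, u i⟫_ℝ ≤ s := fun i => by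
    simpa using inner_add_ellipsoidSupport_le_and_sub_le hα₀ fun t ht =>
      hEP _ (hEell ▸ ⟨t, ht, rfl⟩) i
  have hfin : finrank ℝ (EuclideanSpace ℝ (Fin n)) = n := finrank_euclideanSpace_fin
  set T := (n : ℝ) * (s + 1) / (2 * k)
  have hT : 0 < T := by positivity
  have hkT : (Fintype.card (Fin k) : ℝ) * T = n * (s + 1) / 2 := by
    simp only [T, Fintype.card_fin]; field_simp
  have hle : ∑ j, α j ^ 2 ≤ Fintype.card (Fin k) * T := by
    rw [hkT]
    simpa [hfin] using sum_sq_le_of_forall_ellipsoidSupport_le hu (fun i => (hlam i).le)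
      hsum hdecomp hv.1 hwidth
  refine ⟨by simpa using prod_le_sqrt_pow_card_of_sum_sq_le hT (fun j => (hα j).le) hle,
    fun hprod => ?_⟩
  have hαT := eq_sqrt_of_prod_eq_sqrt_pow_card hT hα hle (by simpa using hprod)
  have heq : ∑ j, α j ^ 2 = finrank ℝ (EuclideanSpace ℝ (Fin n)) * (s + 1) / 2 := by
    simp [hαT, sq_sqrt hT.le, hfin, ← hkT]
  have hc := fun i => sq_eq_and_eq_of_sq_eq (sqrt_nonneg _) (hwidth i).1 (hwidth i).2
    (ellipsoidSupport_sq_eq_of_sum_sq_eq hu hlam hsum hdecomp hv.1 hwidth heq i)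
  have hnorm := norm_sq_eq_of_sum_sq_eq hu hsum hdecomp hv.1 heq fun i => (hc i).1
  refine ⟨hαT, by rwa [hfin] at hnorm,
    inner_center_axis_eq_zero hsum hdecomp hα₀ (fun i => (hc i).1) fun i => (hc i).2,
    fun i => (hc i).2, ?_⟩
  simpa [hfin] using le_one_or_one_add_two_div_le hu hsum hdecomp (by rw [hfin]; omega) hnorm
    fun i => (hc i).2

/-- asymmetry-dependent upper bound for inscribed ellipsoids
(Lemma 3.6 of the paper), with necessary conditions for equality. -/
theorem stmt5 (n k : ℕ) (hn : 2 ≤ n) (hk : 1 ≤ k) (hkn : k ≤ n - 1)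
    (m : ℕ) (u : Fin m → EuclideanSpace ℝ (Fin n)) (lam : Fin m → ℝ)
    (hu : ∀ i, ‖u i‖ = 1) (hlam : ∀ i, 0 < lam i)
    (hsum : ∑ i, lam i • u i = 0)
    (hdecomp : ∀ x : EuclideanSpace ℝ (Fin n), ∑ i, (lam i * ⟪u i, x⟫_ℝ) • u i = x)
    (s : ℝ) (hs : 0 < s)
    (v : Fin k → EuclideanSpace ℝ (Fin n)) (hv : Orthonormal ℝ v)
    (c : EuclideanSpace ℝ (Fin n))
    (α : Fin k → ℝ) (hα : ∀ j, 0 < α j)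
    (Eell : Set (EuclideanSpace ℝ (Fin n)))
    (hEell : Eell = {x | ∃ t : Fin k → ℝ,
      ∑ j, (t j) ^ 2 / (α j) ^ 2 ≤ 1 ∧ x = c + ∑ j, t j • v j})
    (hEP : ∀ x ∈ Eell, ∀ i, -s ≤ ⟪x, u i⟫_ℝ ∧ ⟪x, u i⟫_ℝ ≤ 1) :
    ∏ j, α j ≤ Real.sqrt ((n : ℝ) * (s + 1) / (2 * k)) ^ k ∧
    (∏ j, α j = Real.sqrt ((n : ℝ) * (s + 1) / (2 * k)) ^ k →
      (∀ j, α j = Real.sqrt ((n : ℝ) * (s + 1) / (2 * k))) ∧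
      ‖c‖ ^ 2 = (n : ℝ) * (s - 1) / 2 ∧
      (∀ j, ⟪c, v j⟫_ℝ = 0) ∧
      (∀ i, ⟪c, u i⟫_ℝ = 1 ∨ ⟪c, u i⟫_ℝ = (1 - s) / 2) ∧
      (s ≤ 1 ∨ 1 + 2 / (n : ℝ) ≤ s)) :=
  stmt5_general n k hn hk m u lam hu hlam hsum hdecomp s hs v hv c α hα Eell hEell hEP
end

section
/- Let u¹,…,uᵐ ∈ ℝⁿ (unit vectors) with weights λ₁,…,λₘ > 0 form a John decomposition, and let x, y ∈ ℝⁿ satisfy ⟨x,uᵢ⟩ ≤ 1 and ⟨y,uᵢ⟩ ≤ 1 for every i ∈ {1,…,m}. Then ‖x − y‖ ≤ √(2·(max{‖x‖², ‖y‖²} + n)), with equality if and only if ‖x‖ = ‖y‖ and ⟨x,y⟩ = −n. -/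
/-!
Expanding `x` and `y` in the decomposition gives `⟪x, y⟫ = ∑ λᵢ ⟪uᵢ, x⟫ ⟪uᵢ, y⟫`, and taking the
trace gives `∑ λᵢ = n`. Since `∑ λᵢ uᵢ = 0`, the nonnegative sum `∑ λᵢ (1 - ⟪uᵢ, x⟫) (1 - ⟪uᵢ, y⟫)`
equals `n + ⟪x, y⟫`, so `⟪x, y⟫ ≥ -n`. Then
`‖x - y‖² = ‖x‖² + ‖y‖² - 2 ⟪x, y⟫ ≤ 2 max (‖x‖², ‖y‖²) + 2 n`,
with equality exactly when both estimates are sharp.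
-/

open scoped InnerProductSpace BigOperators

open Finset Module

section JohnDecomposition

variable {E ι : Type*} [NormedAddCommGroup E] [InnerProductSpace ℝ E] [Fintype ι]
  {u : ι → E} {lam : ι → ℝ}

theorem inner_eq_sum_of_decomp (hdecomp : ∀ z, ∑ i, (lam i * ⟪u i, z⟫_ℝ) • u i = z) (x y : E) :
    ⟪x, y⟫_ℝ = ∑ i, lam i * ⟪u i, x⟫_ℝ * ⟪u i, y⟫_ℝ := by
  conv_lhs => rw [← hdecomp x]
  simp only [sum_inner, real_inner_smul_left]

theorem sum_weights_eq_finrank [FiniteDimensional ℝ E] (hu : ∀ i, ‖u i‖ = 1)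
    (hdecomp : ∀ z, ∑ i, (lam i * ⟪u i, z⟫_ℝ) • u i = z) :
    ∑ i, lam i = finrank ℝ E := by
  let b := stdOrthonormalBasis ℝ E
  calc ∑ i, lam i = ∑ i, lam i * ∑ j, ⟪u i, b j⟫_ℝ ^ 2 := by
        simp only [b.sum_sq_inner_left, hu, one_pow, mul_one]
    _ = ∑ j, ∑ i, lam i * ⟪u i, b j⟫_ℝ * ⟪u i, b j⟫_ℝ := by
        simp only [mul_sum, sq, mul_assoc]
        exact sum_comm
    _ = ∑ j, ⟪b j, b j⟫_ℝ := sum_congr rfl fun j _ => (inner_eq_sum_of_decomp hdecomp _ _).symm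
    _ = finrank ℝ E := by
        simp [b.orthonormal.1, ← finrank_eq_card_basis b.toBasis]

theorem neg_sum_weights_le_inner (hlam : ∀ i, 0 ≤ lam i) (hsum : ∑ i, lam i • u i = 0)
    (hdecomp : ∀ z, ∑ i, (lam i * ⟪u i, z⟫_ℝ) • u i = z) {x y : E}
    (hx : ∀ i, ⟪x, u i⟫_ℝ ≤ 1) (hy : ∀ i, ⟪y, u i⟫_ℝ ≤ 1) :
    -∑ i, lam i ≤ ⟪x, y⟫_ℝ := by
  have hmean : ∀ z, ∑ i, lam i * ⟪u i, z⟫_ℝ = 0 := fun z => by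
    simpa only [sum_inner, real_inner_smul_left, inner_zero_left] using congrArg (⟪·, z⟫_ℝ) hsum
  have hnonneg : 0 ≤ ∑ i, lam i * ((1 - ⟪u i, x⟫_ℝ) * (1 - ⟪u i, y⟫_ℝ)) :=
    sum_nonneg fun i _ => mul_nonneg (hlam i) <| mul_nonneg
      (sub_nonneg.2 <| real_inner_comm x (u i) ▸ hx i)
      (sub_nonneg.2 <| real_inner_comm y (u i) ▸ hy i)
  have hexpand : ∑ i, lam i * ((1 - ⟪u i, x⟫_ℝ) * (1 - ⟪u i, y⟫_ℝ)) = ∑ i, lam i + ⟪x, y⟫_ℝ := by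
    simp only [mul_sub, sub_mul, one_mul, mul_one, sum_sub_distrib, ← mul_assoc, hmean,
      inner_eq_sum_of_decomp hdecomp x y]
    ring
  linarith

end JohnDecomposition

section DistanceBound

variable {E : Type*} [NormedAddCommGroup E] [InnerProductSpace ℝ E]

theorem norm_sub_sq_le_two_mul_max_add {x y : E} {c : ℝ} (h : -c ≤ ⟪x, y⟫_ℝ) :
    ‖x - y‖ ^ 2 ≤ 2 * (max (‖x‖ ^ 2) (‖y‖ ^ 2) + c) := by
  rw [norm_sub_sq_real]
  linarith [le_max_left (‖x‖ ^ 2) (‖y‖ ^ 2), le_max_right (‖x‖ ^ 2) (‖y‖ ^ 2)]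

theorem norm_sub_sq_eq_two_mul_max_add_iff {x y : E} {c : ℝ} (h : -c ≤ ⟪x, y⟫_ℝ) :
    ‖x - y‖ ^ 2 = 2 * (max (‖x‖ ^ 2) (‖y‖ ^ 2) + c) ↔ ‖x‖ = ‖y‖ ∧ ⟪x, y⟫_ℝ = -c := by
  rw [norm_sub_sq_real]
  constructor
  · intro heq
    rcases le_total (‖x‖ ^ 2) (‖y‖ ^ 2) with hle | hle
    · rw [max_eq_right hle] at heq
      exact ⟨(pow_left_inj₀ (norm_nonneg x) (norm_nonneg y) two_ne_zero).1 (by linarith),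
        by linarith⟩
    · rw [max_eq_left hle] at heq
      exact ⟨(pow_left_inj₀ (norm_nonneg x) (norm_nonneg y) two_ne_zero).1 (by linarith),
        by linarith⟩
  · rintro ⟨hnorm, hinner⟩
    rw [hnorm, hinner, max_self]
    ring

theorem norm_sub_le_sqrt_two_mul_max_add {x y : E} {c : ℝ} (h : -c ≤ ⟪x, y⟫_ℝ) :
    ‖x - y‖ ≤ √(2 * (max (‖x‖ ^ 2) (‖y‖ ^ 2) + c)) ∧
      (‖x - y‖ = √(2 * (max (‖x‖ ^ 2) (‖y‖ ^ 2) + c)) ↔ ‖x‖ = ‖y‖ ∧ ⟪x, y⟫_ℝ = -c) := by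
  have hle := norm_sub_sq_le_two_mul_max_add h
  have hnonneg := (sq_nonneg _).trans hle
  refine ⟨(Real.le_sqrt (norm_nonneg _) hnonneg).2 hle, ?_⟩
  rw [← norm_sub_sq_eq_two_mul_max_add_iff h, eq_comm,
    Real.sqrt_eq_iff_eq_sq hnonneg (norm_nonneg _), eq_comm]

end DistanceBound

/-- distance bound for points below the supporting hyperplanes of a
John decomposition, with equality characterization. -/
theorem stmt14 (n m : ℕ)
    (u : Fin m → EuclideanSpace ℝ (Fin n)) (lam : Fin m → ℝ)
    (hu : ∀ i, ‖u i‖ = 1) (hlam : ∀ i, 0 < lam i)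
    (hsum : ∑ i, lam i • u i = 0)
    (hdecomp : ∀ z : EuclideanSpace ℝ (Fin n), ∑ i, (lam i * ⟪u i, z⟫_ℝ) • u i = z)
    (x y : EuclideanSpace ℝ (Fin n))
    (hx : ∀ i, ⟪x, u i⟫_ℝ ≤ 1) (hy : ∀ i, ⟪y, u i⟫_ℝ ≤ 1) :
    ‖x - y‖ ≤ Real.sqrt (2 * (max (‖x‖ ^ 2) (‖y‖ ^ 2) + n)) ∧
    (‖x - y‖ = Real.sqrt (2 * (max (‖x‖ ^ 2) (‖y‖ ^ 2) + n)) ↔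
      ‖x‖ = ‖y‖ ∧ ⟪x, y⟫_ℝ = -(n : ℝ)) := by
  have hweights : ∑ i, lam i = n := by
    rw [sum_weights_eq_finrank hu hdecomp, finrank_euclideanSpace_fin]
  have hinner : -(n : ℝ) ≤ ⟪x, y⟫_ℝ :=
    hweights ▸ neg_sum_weights_le_inner (fun i => (hlam i).le) hsum hdecomp hx hy
  exact norm_sub_le_sqrt_two_mul_max_add hinner
end
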